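/- For every real c > 0, the ratio C(n, ⌊n/2 + (c/2)√n⌋) / C(n, ⌊n/2⌋) converges to exp(−c²/2) as n → ∞. -/

import Mathlib

/-!
Write `m = ⌊n/2⌋` and `k ≥ m`. The ratio `C(n,k) / C(n,m)` is the product of the factors
`(n + 1 - j) / j` over `m < j ≤ k`, each at most `1`. The bounds `exp (1 - 1/x) ≤ x ≤ exp (x - 1)`
squeeze it between `exp (-T / (n + 1 - k))` and `exp (-T / k)`, where
`T = ∑ (2j - n - 1) = (k - m)(k + m - n)`. When `k - n/2 ~ L √n`, both `k - m` and `k + m - n`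
are `~ L √n`, so `T ~ L² n`, while `k` and `n + 1 - k` are `~ n / 2`; both bounds tend to
`exp (-2 L²)`.
-/

open Filter Real Finset Topology

theorem div_le_exp_neg_sub_div {x y d : ℝ} (hxy : x ≤ y) (hy : 0 < y) (hyd : y ≤ d) :
    x / y ≤ exp (-(y - x) / d) :=
  calc x / y = -(y - x) / y + 1 := by field_simp; ring
    _ ≤ exp (-(y - x) / y) := add_one_le_exp _
    _ ≤ exp (-(y - x) / d) := by
      rw [exp_le_exp, neg_div, neg_div, neg_le_neg_iff]
      exact div_le_div_of_nonneg_left (by linarith) hy hyd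

theorem exp_neg_sub_div_le_div {x y d : ℝ} (hxy : x ≤ y) (hd : 0 < d) (hdx : d ≤ x) :
    exp (-(y - x) / d) ≤ x / y := by
  have hx : 0 < x := hd.trans_le hdx
  have hy : 0 < y := hx.trans_le hxy
  calc exp (-(y - x) / d) ≤ exp (-(y - x) / x) := by
        rw [exp_le_exp, neg_div, neg_div, neg_le_neg_iff]
        exact div_le_div_of_nonneg_left (by linarith) hd hdx
    _ = exp (1 - (x / y)⁻¹) := by rw [inv_div]; field_simp; ring_nf
    _ ≤ x / y := by
      simpa [exp_log (by positivity : 0 < x / y)] using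
        exp_le_exp.2 (one_sub_inv_le_log_of_pos (by positivity : 0 < x / y))

section ChooseRatio

variable {n m k : ℕ}

theorem cast_choose_eq_mul_prod_Ioc (hmk : m ≤ k) (hkn : k ≤ n) :
    (n.choose k : ℝ) = n.choose m * ∏ j ∈ Ioc m k, ((n + 1 - j : ℝ) / j) := by
  induction k, hmk using Nat.le_induction with
  | base => simp
  | succ k hmk ih =>
    have hkn' : k ≤ n := by omega
    have h := Nat.choose_succ_right_eq n k
    rw [← Nat.cast_inj (R := ℝ)] at h
    push_cast [Nat.cast_sub hkn'] at h
    rw [prod_Ioc_succ_top hmk, ← mul_assoc, ← ih hkn']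
    field_simp
    push_cast
    linarith

theorem cast_choose_div_choose_eq_prod_Ioc (hmk : m ≤ k) (hkn : k ≤ n) :
    (n.choose k : ℝ) / n.choose m = ∏ j ∈ Ioc m k, ((n + 1 - j : ℝ) / j) := by
  have hm : (n.choose m : ℝ) ≠ 0 := by exact_mod_cast (Nat.choose_pos (hmk.trans hkn)).ne'
  rw [cast_choose_eq_mul_prod_Ioc hmk hkn, mul_div_cancel_left₀ _ hm]

theorem exp_neg_div_eq_prod_Ioc (n : ℕ) (hmk : m ≤ k) (d : ℝ) :
    exp (-((k - m) * (k + m - n)) / d) = ∏ j ∈ Ioc m k, exp (-(j - (n + 1 - j)) / d) := by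
  have hsum : ∑ j ∈ Ioc m k, ((j : ℝ) - (n + 1 - j)) = (k - m) * (k + m - n) := by
    induction k, hmk using Nat.le_induction with
    | base => simp
    | succ k hmk ih =>
      rw [sum_Ioc_succ_top hmk, ih]
      push_cast
      ring
  rw [← exp_sum, ← sum_div, sum_neg_distrib, hsum]

theorem cast_choose_div_choose_le_exp (hmk : m ≤ k) (hkn : k ≤ n) (hnm : n ≤ 2 * m + 1) :
    (n.choose k : ℝ) / n.choose m ≤ exp (-((k - m) * (k + m - n)) / k) := by
  rw [cast_choose_div_choose_eq_prod_Ioc hmk hkn, exp_neg_div_eq_prod_Ioc n hmk]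
  refine prod_le_prod (fun j hj => ?_) fun j hj => ?_
  · have hjn : (j : ℝ) ≤ n := by exact_mod_cast (mem_Ioc.1 hj).2.trans hkn
    exact div_nonneg (by linarith) j.cast_nonneg
  · obtain ⟨hmj, hjk⟩ := mem_Ioc.1 hj
    have : (n : ℝ) + 1 ≤ 2 * j := by exact_mod_cast (by omega : n + 1 ≤ 2 * j)
    exact div_le_exp_neg_sub_div (by linarith) (by exact_mod_cast (by omega : 0 < j))
      (by exact_mod_cast hjk)

theorem exp_le_cast_choose_div_choose (hmk : m ≤ k) (hkn : k ≤ n) (hnm : n ≤ 2 * m + 1) :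
    exp (-((k - m) * (k + m - n)) / (n + 1 - k)) ≤ (n.choose k : ℝ) / n.choose m := by
  rw [cast_choose_div_choose_eq_prod_Ioc hmk hkn, exp_neg_div_eq_prod_Ioc n hmk]
  refine prod_le_prod (fun j _ => (exp_pos _).le) fun j hj => ?_
  obtain ⟨hmj, hjk⟩ := mem_Ioc.1 hj
  have : (j : ℝ) ≤ k := by exact_mod_cast hjk
  have : (k : ℝ) ≤ n := by exact_mod_cast hkn
  have : (n : ℝ) + 1 ≤ 2 * j := by exact_mod_cast (by omega : n + 1 ≤ 2 * j)
  exact exp_neg_sub_div_le_div (by linarith) (by linarith) (by linarith)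

end ChooseRatio

theorem tendsto_inv_sqrt_natCast : Tendsto (fun n : ℕ => (√n)⁻¹) atTop (𝓝 0) :=
  tendsto_inv_atTop_zero.comp (tendsto_sqrt_atTop.comp tendsto_natCast_atTop_atTop)

theorem tendsto_div_sqrt_of_abs_le {a : ℕ → ℝ} {C : ℝ} (ha : ∀ n, |a n| ≤ C) :
    Tendsto (fun n => a n / √n) atTop (𝓝 0) := by
  simpa [div_eq_mul_inv, mul_comm] using tendsto_inv_sqrt_natCast.zero_mul_isBoundedUnder_le
    (isBoundedUnder_of ⟨C, fun n => by simpa using ha n⟩ : IsBoundedUnder (· ≤ ·) atTop (‖a ·‖))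

theorem abs_cast_div_two_sub_le (n : ℕ) : |((n / 2 : ℕ) : ℝ) - n / 2| ≤ 1 / 2 := by
  have h1 : ((2 * (n / 2) : ℕ) : ℝ) ≤ n := by exact_mod_cast Nat.mul_div_le n 2
  have h2 : (n : ℝ) ≤ (2 * (n / 2) + 1 : ℕ) := by exact_mod_cast (by omega : n ≤ 2 * (n / 2) + 1)
  push_cast at h1 h2
  rw [abs_le]
  constructor <;> linarith

section CentralWindow

variable {k : ℕ → ℕ} {L : ℝ}

theorem tendsto_mul_sub_div_natCast_of_tendsto_sub_half_div_sqrt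
    (hk : Tendsto (fun n : ℕ => ((k n : ℝ) - n / 2) / √n) atTop (𝓝 L)) :
    Tendsto (fun n : ℕ => ((k n : ℝ) - (n / 2 : ℕ)) * (k n + (n / 2 : ℕ) - n) / n)
      atTop (𝓝 (L ^ 2)) := by
  have hhalf : Tendsto (fun n : ℕ => (((n / 2 : ℕ) : ℝ) - n / 2) / √n) atTop (𝓝 0) :=
    tendsto_div_sqrt_of_abs_le abs_cast_div_two_sub_le
  have h := (hk.sub hhalf).mul (hk.add hhalf)
  rw [sub_zero, add_zero, ← sq] at h
  refine h.congr fun n => ?_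
  rw [← sub_div, ← add_div]
  exact (div_mul_div_comm _ _ _ _).trans (by rw [mul_self_sqrt n.cast_nonneg]; ring)

theorem tendsto_div_natCast_of_tendsto_sub_half_div_sqrt
    (hk : Tendsto (fun n : ℕ => ((k n : ℝ) - n / 2) / √n) atTop (𝓝 L)) :
    Tendsto (fun n : ℕ => (k n : ℝ) / n) atTop (𝓝 (1 / 2)) := by
  have h := (hk.mul tendsto_inv_sqrt_natCast).const_add (1 / 2)
  rw [mul_zero, add_zero] at h
  refine h.congr' ?_
  filter_upwards [eventually_gt_atTop 0] with n hn
  field_simp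
  rw [sq_sqrt n.cast_nonneg]
  ring

theorem tendsto_cast_choose_div_choose_half
    (hk : Tendsto (fun n : ℕ => ((k n : ℝ) - n / 2) / √n) atTop (𝓝 L))
    (hk_mem : ∀ᶠ n in atTop, n / 2 ≤ k n ∧ k n ≤ n) :
    Tendsto (fun n : ℕ => (n.choose (k n) : ℝ) / n.choose (n / 2)) atTop
      (𝓝 (exp (-2 * L ^ 2))) := by
  have hT := tendsto_mul_sub_div_natCast_of_tendsto_sub_half_div_sqrt hk
  have hk_div := tendsto_div_natCast_of_tendsto_sub_half_div_sqrt hk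
  have hk_div' : Tendsto (fun n : ℕ => ((n : ℝ) + 1 - k n) / n) atTop (𝓝 (1 / 2)) := by
    rw [show (1 / 2 : ℝ) = 1 + 0 - 1 / 2 by norm_num]
    refine ((tendsto_one_div_atTop_nhds_zero_nat.const_add 1).sub hk_div).congr' ?_
    filter_upwards [eventually_gt_atTop 0] with n hn
    field_simp
  rw [show -2 * L ^ 2 = -(L ^ 2 / (1 / 2)) by ring]
  have hupper := (hT.div hk_div (by norm_num)).neg.rexp
  have hlower := (hT.div hk_div' (by norm_num)).neg.rexp
  refine tendsto_of_tendsto_of_tendsto_of_le_of_le' hlower hupper ?_ ?_ <;>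
    filter_upwards [hk_mem, eventually_gt_atTop 0] with n ⟨hmk, hkn⟩ hn <;>
    rw [Pi.div_apply, div_div_div_cancel_right₀ (by positivity), ← neg_div]
  · exact exp_le_cast_choose_div_choose hmk hkn (by omega)
  · exact cast_choose_div_choose_le_exp hmk hkn (by omega)

end CentralWindow

theorem tendsto_floor_sub_half_div_sqrt {c : ℝ} (hc : 0 ≤ c) :
    Tendsto (fun n : ℕ => ((⌊(n : ℝ) / 2 + c / 2 * √n⌋₊ : ℝ) - n / 2) / √n) atTop
      (𝓝 (c / 2)) := by
  have hfloor (n : ℕ) : |(⌊(n : ℝ) / 2 + c / 2 * √n⌋₊ : ℝ) - (n / 2 + c / 2 * √n)| ≤ 1 := by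
    have hx : 0 ≤ (n : ℝ) / 2 + c / 2 * √n := by positivity
    rw [abs_le]
    constructor <;> linarith [Nat.floor_le hx, Nat.lt_floor_add_one ((n : ℝ) / 2 + c / 2 * √n)]
  have h := (tendsto_div_sqrt_of_abs_le hfloor).const_add (c / 2)
  rw [add_zero] at h
  refine h.congr' ?_
  filter_upwards [eventually_gt_atTop 0] with n hn
  field_simp
  ring

theorem eventually_half_le_floor_le {c : ℝ} (hc : 0 ≤ c) :
    ∀ᶠ n : ℕ in atTop, n / 2 ≤ ⌊(n : ℝ) / 2 + c / 2 * √n⌋₊ ∧ ⌊(n : ℝ) / 2 + c / 2 * √n⌋₊ ≤ n := by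
  filter_upwards [tendsto_natCast_atTop_atTop.eventually_ge_atTop (c ^ 2)] with n hn
  constructor
  · rw [← Nat.floor_div_eq_div (K := ℝ) n 2]
    have : 0 ≤ c / 2 * √n := by positivity
    exact Nat.floor_le_floor (by push_cast; linarith)
  · refine Nat.floor_le_of_le ?_
    have hcs : c ≤ √n := by simpa [sqrt_sq hc] using sqrt_le_sqrt hn
    nlinarith [mul_self_sqrt n.cast_nonneg, sqrt_nonneg n]

/-- For every `c > 0`, `C(n, ⌊n/2 + (c/2)√n⌋) / C(n, ⌊n/2⌋) → exp(−c²/2)` as `n → ∞`. -/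
theorem binomial_ratio_tendsto (c : ℝ) (hc : 0 < c) :
    Filter.Tendsto
      (fun n : ℕ =>
        ((n.choose ⌊(n : ℝ) / 2 + (c / 2) * Real.sqrt n⌋₊ : ℝ)) / (n.choose (n / 2) : ℝ))
      Filter.atTop (nhds (Real.exp (-c ^ 2 / 2))) := by
  have h := tendsto_cast_choose_div_choose_half (tendsto_floor_sub_half_div_sqrt hc.le)
    (eventually_half_le_floor_le hc.le)
  rwa [show -2 * (c / 2) ^ 2 = -c ^ 2 / 2 by ring] at h
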